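/- Let n ∈ ℕ and fix a measurable probability kernel Q : Z^n → P(H). For all β, δ ∈ (0,1) and all probability distributions D on Z, the expected linear PAC-Bayes bound P ↦ E_{S∼D^n}[Ψ_{β,δ}(Q(S), P; S)] is minimized over probability distributions P on H by the oracle prior P* = E_{S∼D^n}[Q(S)], i.e., the mixture distribution defined by P*(B) = E_{S∼D^n}[Q(S)(B)] for measurable B ⊆ H; that is, for every probability distribution P on H, E_{S∼D^n}[Ψ_{β,δ}(Q(S), P*; S)] ≤ E_{S∼D^n}[Ψ_{β,δ}(Q(S), P; S)]. -/

import Mathlib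

open MeasureTheory Set
open scoped ENNReal NNReal

-- Kullback–Leibler divergence, valued in `ℝ≥0∞`: equal to `∫ log(dQ/dP) dQ` when
-- `Q ≪ P` and this integral is well defined, and `∞` otherwise.
open Classical in
noncomputable def klDivE {H : Type*} [MeasurableSpace H] (Q P : Measure H) : ℝ≥0∞ :=
  if Q ≪ P ∧ Integrable (llr Q P) Q
  then ENNReal.ofReal (∫ h, llr Q P h ∂Q)
  else ⊤

-- Risk of a Gibbs classifier `Q` under data distribution `D`.
noncomputable def gibbsRisk {H Z : Type*} [MeasurableSpace H] [MeasurableSpace Z]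
    (ℓ : H → Z → ℝ) (D : Measure Z) (Q : Measure H) : ℝ :=
  ∫ h, ∫ z, ℓ h z ∂D ∂Q

-- Empirical risk of a Gibbs classifier `Q` on the sample `S`.
noncomputable def gibbsEmpRisk {H Z : Type*} [MeasurableSpace H]
    (ℓ : H → Z → ℝ) {n : ℕ} (S : Fin n → Z) (Q : Measure H) : ℝ :=
  ∫ h, (∑ i, ℓ h (S i)) / n ∂Q

-- The linear PAC-Bayes bound functional
-- `Ψ_{β,δ}(Q, P; S) = (1/β)·L̂_S(Q) + (KL(Q‖P) + log(1/δ)) / (2β(1−β)|S|)`.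
noncomputable def Psi {H Z : Type*} [MeasurableSpace H]
    (ℓ : H → Z → ℝ) (β δ : ℝ) {n : ℕ} (Q P : Measure H) (S : Fin n → Z) : ℝ≥0∞ :=
  ENNReal.ofReal ((1 / β) * gibbsEmpRisk ℓ S Q) +
    (klDivE Q P + ENNReal.ofReal (Real.log (1 / δ))) /
      ENNReal.ofReal (2 * β * (1 - β) * n)

/-!
Write `P* = E_S[Q(S)]`. For a single sample, the chain rule
`log dQ_S/dP = log dQ_S/dP* + log dP*/dP` gives
`KL(Q_S‖P*) + E_{Q_S}[(log dP*/dP)⁺] ≤ KL(Q_S‖P) + E_{Q_S}[(log dP*/dP)⁻]`.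
Averaged over `S`, the two correction terms become the positive and negative parts of
`KL(P*‖P) = E_{P*}[log dP*/dP]`, so Gibbs' inequality `KL(P*‖P) ≥ 0` says the first dominates the
second; the negative part has expectation at most `1`, so it can be cancelled. Working with these
two measurable correction terms avoids ever needing measurability of `S ↦ KL(Q_S‖P)`.
-/

open InformationTheory

section
variable {α : Type*} [MeasurableSpace α] {μ : Measure α}

lemma integrable_of_lintegral_ofReal_ne_top {f : α → ℝ} (hf : AEStronglyMeasurable f μ)
    (hpos : ∫⁻ x, ENNReal.ofReal (f x) ∂μ ≠ ∞) (hneg : ∫⁻ x, ENNReal.ofReal (-f x) ∂μ ≠ ∞) :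
    Integrable f μ := by
  refine ((integrable_toReal_of_lintegral_ne_top hf.aemeasurable.ennreal_ofReal hpos).sub
    (integrable_toReal_of_lintegral_ne_top hf.aemeasurable.neg.ennreal_ofReal hneg)).congr
    (ae_of_all _ fun x => ?_)
  simp [ENNReal.toReal_ofReal', max_zero_sub_max_neg_zero_eq_self]

lemma lintegral_le_lintegral_of_ae_add_le_add {f g u v : α → ℝ≥0∞} (hu : Measurable u)
    (hv : Measurable v) (h : ∀ᵐ x ∂μ, f x + u x ≤ g x + v x)
    (huv : ∫⁻ x, v x ∂μ ≤ ∫⁻ x, u x ∂μ) (hv_ne_top : ∫⁻ x, v x ∂μ ≠ ∞) :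
    ∫⁻ x, f x ∂μ ≤ ∫⁻ x, g x ∂μ := by
  by_cases hg : ∫⁻ x, g x ∂μ = ∞
  · simp [hg]
  have key : ∫⁻ x, f x ∂μ + ∫⁻ x, u x ∂μ ≤ ∫⁻ x, g x ∂μ + ∫⁻ x, v x ∂μ := by
    rw [← lintegral_add_right _ hu, ← lintegral_add_right _ hv]
    exact lintegral_mono_ae h
  have hu_ne_top : ∫⁻ x, u x ∂μ ≠ ∞ :=
    ne_top_of_le_ne_top (ENNReal.add_ne_top.2 ⟨hg, hv_ne_top⟩) (le_add_self.trans key)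
  exact (ENNReal.add_le_add_iff_right hu_ne_top).1 (key.trans (add_le_add_right huv _))

end

section
variable {H : Type*} [MeasurableSpace H] {q p' p : Measure H}

lemma klDivE_eq_klDiv (q p : Measure H) [IsProbabilityMeasure q] [IsProbabilityMeasure p] :
    klDivE q p = klDiv q p := by
  rw [klDivE, klDiv_def]
  split_ifs <;> simp

lemma klDiv_eq_ofReal_integral_llr [IsProbabilityMeasure q] [IsProbabilityMeasure p]
    (hqp : q ≪ p) (hint : Integrable (llr q p) q) :
    klDiv q p = ENNReal.ofReal (∫ x, llr q p x ∂q) := by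
  simp [klDiv_of_ac_of_integrable hqp hint]

lemma integral_llr_nonneg [IsProbabilityMeasure q] [IsProbabilityMeasure p]
    (hqp : q ≪ p) (hint : Integrable (llr q p) q) : 0 ≤ ∫ x, llr q p x ∂q := by
  simpa using integral_llr_add_sub_measure_univ_nonneg hqp hint

lemma lintegral_ofReal_neg_llr_le [SigmaFinite q] [SigmaFinite p] (hqp : q ≪ p) :
    ∫⁻ x, ENNReal.ofReal (-llr q p x) ∂q ≤ p univ := by
  rw [← lintegral_rnDeriv_mul hqp (f := fun x => ENNReal.ofReal (-llr q p x)) (by fun_prop)]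
  calc ∫⁻ x, q.rnDeriv p x * ENNReal.ofReal (-llr q p x) ∂p ≤ ∫⁻ _, 1 ∂p := by
        refine lintegral_mono_ae ?_
        filter_upwards [Measure.rnDeriv_ne_top q p] with x hx
        calc q.rnDeriv p x * ENNReal.ofReal (-llr q p x)
            = ENNReal.ofReal (Real.negMulLog (q.rnDeriv p x).toReal) := by
              rw [Real.negMulLog, neg_mul_comm, ENNReal.ofReal_mul ENNReal.toReal_nonneg,
                ENNReal.ofReal_toReal hx, llr]
          _ ≤ ENNReal.ofReal 1 := by
              gcongr
              linarith [Real.negMulLog_le_one_sub_self (ENNReal.toReal_nonneg (a := q.rnDeriv p x)),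
                ENNReal.toReal_nonneg (a := q.rnDeriv p x)]
          _ = 1 := ENNReal.ofReal_one
    _ = p univ := by simp

lemma absolutelyContinuous_of_ae_rnDeriv_ne_zero (hqp : q ≪ p)
    (h : ∀ᵐ x ∂q, p'.rnDeriv p x ≠ 0) : q ≪ p' := by
  refine Measure.AbsolutelyContinuous.mk fun s hs hp's => ?_
  have hzero : ∀ᵐ x ∂p.restrict s, p'.rnDeriv p x = 0 :=
    (lintegral_eq_zero_iff (Measure.measurable_rnDeriv p' p)).mp
      (le_antisymm ((Measure.setLIntegral_rnDeriv_le s).trans hp's.le) zero_le)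
  have hzero_q : ∀ᵐ x ∂q, x ∈ s → p'.rnDeriv p x = 0 :=
    (ae_restrict_iff' hs).mp ((hqp.restrict s).ae_le hzero)
  refine measure_eq_zero_iff_ae_notMem.mpr ?_
  filter_upwards [hzero_q, h] with x h0 hne hx using hne (h0 hx)

lemma llr_ae_eq_add [SigmaFinite q] [SigmaFinite p'] [SigmaFinite p] (hqp' : q ≪ p')
    (hp'p : p' ≪ p) : llr q p =ᵐ[q] llr q p' + llr p' p := by
  have hqp : q ≪ p := hqp'.trans hp'p
  filter_upwards [hqp.ae_le (Measure.rnDeriv_mul_rnDeriv hqp' (κ := p)),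
    Measure.rnDeriv_pos hqp', hqp'.ae_le (Measure.rnDeriv_ne_top q p'),
    hqp'.ae_le (Measure.rnDeriv_pos hp'p), hqp.ae_le (Measure.rnDeriv_ne_top p' p)]
    with x hmul hq_pos hq_top hp_pos hp_top
  simp only [llr, Pi.add_apply, ← hmul, Pi.mul_apply, ENNReal.toReal_mul]
  exact Real.log_mul (ENNReal.toReal_pos hq_pos.ne' hq_top).ne'
    (ENNReal.toReal_pos hp_pos.ne' hp_top).ne'

lemma klDiv_add_lintegral_ofReal_llr_le [IsProbabilityMeasure q] [IsProbabilityMeasure p']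
    [IsProbabilityMeasure p] (hp'p : p' ≪ p) (h : ∀ᵐ x ∂q, p'.rnDeriv p x ≠ 0) :
    klDiv q p' + ∫⁻ x, ENNReal.ofReal (llr p' p x) ∂q ≤
      klDiv q p + ∫⁻ x, ENNReal.ofReal (-llr p' p x) ∂q := by
  set U := ∫⁻ x, ENNReal.ofReal (llr p' p x) ∂q
  set V := ∫⁻ x, ENNReal.ofReal (-llr p' p x) ∂q
  by_cases hfin : klDiv q p = ∞ ∨ V = ∞
  · rcases hfin with h | h <;> simp [h]
  obtain ⟨hK, hV⟩ := not_or.mp hfin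
  obtain ⟨hqp, hint⟩ := klDiv_ne_top_iff.mp hK
  have hqp' : q ≪ p' := absolutelyContinuous_of_ae_rnDeriv_ne_zero hqp h
  have hchain := llr_ae_eq_add hqp' hp'p
  have hU : U ≠ ∞ := by
    have hle : U ≤ ∫⁻ x, ENNReal.ofReal (llr q p x) ∂q + ∫⁻ x, ENNReal.ofReal (-llr q p' x) ∂q := by
      rw [← lintegral_add_left (measurable_llr q p).ennreal_ofReal]
      refine lintegral_mono_ae ?_
      filter_upwards [hchain] with x hx
      calc ENNReal.ofReal (llr p' p x) = ENNReal.ofReal (llr q p x + -llr q p' x) := by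
            rw [hx, Pi.add_apply]; ring_nf
        _ ≤ _ := ENNReal.ofReal_add_le
    refine ne_top_of_le_ne_top (ENNReal.add_ne_top.2 ⟨hint.lintegral_lt_top.ne, ?_⟩) hle
    exact ne_top_of_le_ne_top (by simp) (lintegral_ofReal_neg_llr_le hqp')
  have hint_p'p : Integrable (llr p' p) q :=
    integrable_of_lintegral_ofReal_ne_top (measurable_llr p' p).aestronglyMeasurable hU hV
  have hint_qp' : Integrable (llr q p') q :=
    (hint.sub hint_p'p).congr (by filter_upwards [hchain] with x hx; simp [hx])
  have hsplit : ∫ x, llr q p' x ∂q = ∫ x, llr q p x ∂q - (U.toReal - V.toReal) := by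
    rw [← integral_eq_lintegral_pos_part_sub_lintegral_neg_part hint_p'p,
      ← integral_sub hint hint_p'p]
    exact integral_congr_ae (by filter_upwards [hchain] with x hx; simp [hx])
  have h1 := integral_llr_nonneg hqp hint
  have h2 := integral_llr_nonneg hqp' hint_qp'
  rw [hsplit] at h2
  rw [klDiv_eq_ofReal_integral_llr hqp' hint_qp', klDiv_eq_ofReal_integral_llr hqp hint, hsplit]
  refine le_of_eq ?_
  calc ENNReal.ofReal (∫ x, llr q p x ∂q - (U.toReal - V.toReal)) + U
      = ENNReal.ofReal (∫ x, llr q p x ∂q - (U.toReal - V.toReal) + U.toReal) := by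
        rw [ENNReal.ofReal_add h2 ENNReal.toReal_nonneg, ENNReal.ofReal_toReal hU]
    _ = ENNReal.ofReal (∫ x, llr q p x ∂q + V.toReal) := by ring_nf
    _ = ENNReal.ofReal (∫ x, llr q p x ∂q) + V := by
        rw [ENNReal.ofReal_add h1 ENNReal.toReal_nonneg, ENNReal.ofReal_toReal hV]

lemma lintegral_ofReal_neg_llr_le_lintegral_ofReal_llr [IsProbabilityMeasure p']
    [IsProbabilityMeasure p] (h : p' ≪ p) :
    ∫⁻ x, ENNReal.ofReal (-llr p' p x) ∂p' ≤ ∫⁻ x, ENNReal.ofReal (llr p' p x) ∂p' := by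
  by_cases hU : ∫⁻ x, ENNReal.ofReal (llr p' p x) ∂p' = ∞
  · simp [hU]
  have hV : ∫⁻ x, ENNReal.ofReal (-llr p' p x) ∂p' ≠ ∞ :=
    ne_top_of_le_ne_top (by simp) (lintegral_ofReal_neg_llr_le h)
  have hint := integrable_of_lintegral_ofReal_ne_top (measurable_llr p' p).aestronglyMeasurable hU hV
  have hgibbs := integral_llr_nonneg h hint
  rw [integral_eq_lintegral_pos_part_sub_lintegral_neg_part hint, sub_nonneg] at hgibbs
  exact (ENNReal.toReal_le_toReal hV hU).mp hgibbs

lemma absolutelyContinuous_bind_of_lintegral_ne_top {α : Type*} [MeasurableSpace α]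
    {μ : Measure α} {κ : α → Measure H} (hκ : Measurable κ) {f : α → ℝ≥0∞}
    (hf : ∀ a, ¬ κ a ≪ p → f a = ∞) (h : ∫⁻ a, f a ∂μ ≠ ∞) : μ.bind κ ≪ p := by
  refine Measure.AbsolutelyContinuous.mk fun s hs hps => ?_
  set G := {a | κ a s ≠ 0}
  have hG : MeasurableSet G :=
    ((Measure.measurable_coe hs).comp hκ) (measurableSet_singleton 0).compl
  have hμG : μ G = 0 := by
    by_contra hμG
    refine h (top_le_iff.mp ?_)
    calc ∞ = ∫⁻ _ in G, ∞ ∂μ := by simp [ENNReal.top_mul hμG]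
      _ ≤ ∫⁻ a in G, f a ∂μ := setLIntegral_mono' hG fun a ha => (hf a fun hac => ha (hac hps)).ge
      _ ≤ ∫⁻ a, f a ∂μ := setLIntegral_le_lintegral G f
  rw [Measure.bind_apply hs hκ.aemeasurable, lintegral_congr_ae (g := fun _ => 0), lintegral_zero]
  filter_upwards [measure_eq_zero_iff_ae_notMem.mp hμG] with a ha
  simpa [G] using ha

theorem exists_klDiv_bind_add_le_klDiv_add {α : Type*} [MeasurableSpace α] {μ : Measure α}
    {κ : α → Measure H} (hκ : Measurable κ) (hκ_prob : ∀ a, IsProbabilityMeasure (κ a))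
    [IsProbabilityMeasure (μ.bind κ)] [IsProbabilityMeasure p] (hac : μ.bind κ ≪ p) :
    ∃ u v : α → ℝ≥0∞, Measurable u ∧ Measurable v ∧
      (∀ᵐ a ∂μ, klDiv (κ a) (μ.bind κ) + u a ≤ klDiv (κ a) p + v a) ∧
      ∫⁻ a, v a ∂μ ≤ ∫⁻ a, u a ∂μ ∧ ∫⁻ a, v a ∂μ ≤ 1 := by
  refine ⟨fun a => ∫⁻ x, ENNReal.ofReal (llr (μ.bind κ) p x) ∂κ a,
    fun a => ∫⁻ x, ENNReal.ofReal (-llr (μ.bind κ) p x) ∂κ a,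
    (Measure.measurable_lintegral (by fun_prop)).comp hκ,
    (Measure.measurable_lintegral (by fun_prop)).comp hκ, ?_, ?_, ?_⟩
  · filter_upwards [Measure.ae_ae_of_ae_bind hκ.aemeasurable
      ((Measure.rnDeriv_pos hac).mono fun _ h => h.ne')] with a ha
    have := hκ_prob a
    exact klDiv_add_lintegral_ofReal_llr_le hac ha
  · rw [← Measure.lintegral_bind hκ.aemeasurable (by fun_prop),
      ← Measure.lintegral_bind hκ.aemeasurable (by fun_prop)]
    exact lintegral_ofReal_neg_llr_le_lintegral_ofReal_llr hac
  · rw [← Measure.lintegral_bind hκ.aemeasurable (by fun_prop)]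
    simpa using lintegral_ofReal_neg_llr_le hac

end

section
variable {H Z : Type*} [MeasurableSpace H] (ℓ : H → Z → ℝ) (β δ : ℝ) {n : ℕ} (S : Fin n → Z)
  {q p' p : Measure H}

lemma Psi_eq_top_of_not_absolutelyContinuous (h : ¬ q ≪ p) : Psi ℓ β δ q p S = ∞ := by
  simp [Psi, klDivE, h, ENNReal.top_div_of_ne_top]

lemma Psi_add_div_le_Psi_add_div {u v : ℝ≥0∞} (h : klDivE q p' + u ≤ klDivE q p + v) :
    Psi ℓ β δ q p' S + u / ENNReal.ofReal (2 * β * (1 - β) * n) ≤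
      Psi ℓ β δ q p S + v / ENNReal.ofReal (2 * β * (1 - β) * n) := by
  simp only [Psi, add_assoc, ENNReal.div_add_div_same]
  refine add_le_add le_rfl (ENNReal.div_le_div_right ?_ _)
  rw [add_left_comm, add_left_comm (klDivE q p)]
  exact add_le_add le_rfl h

end

theorem oracle_prior_minimizes_expected_linear_bound
    {Z H : Type*} [MeasurableSpace Z] [MeasurableSpace H]
    (ℓ : H → Z → ℝ)
    {n : ℕ} (hn : 0 < n)
    (Q : (Fin n → Z) → Measure H) (hQmeas : Measurable Q)
    (hQprob : ∀ S, IsProbabilityMeasure (Q S))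
    {β δ : ℝ} (hβ : β ∈ Ioo (0 : ℝ) 1)
    (D : Measure Z) [IsProbabilityMeasure D]
    (P : Measure H) [IsProbabilityMeasure P] :
    ∫⁻ S, Psi ℓ β δ (Q S) ((Measure.pi fun _ : Fin n => D).bind Q) S
        ∂(Measure.pi fun _ : Fin n => D) ≤
      ∫⁻ S, Psi ℓ β δ (Q S) P S ∂(Measure.pi fun _ : Fin n => D) := by
  set μ := Measure.pi fun _ : Fin n => D
  set P' := μ.bind Q
  have : IsProbabilityMeasure P' :=
    isProbabilityMeasure_bind hQmeas.aemeasurable (ae_of_all _ hQprob)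
  by_cases hfin : ∫⁻ S, Psi ℓ β δ (Q S) P S ∂μ = ∞
  · exact hfin ▸ le_top
  have hP' : P' ≪ P := absolutelyContinuous_bind_of_lintegral_ne_top hQmeas
    (fun S => Psi_eq_top_of_not_absolutelyContinuous ℓ β δ S) hfin
  obtain ⟨u, v, hu, hv, huv_ae, huv, hv_le⟩ :=
    exists_klDiv_bind_add_le_klDiv_add hQmeas hQprob hP'
  set c := ENNReal.ofReal (2 * β * (1 - β) * n)
  have hc : c ≠ 0 := (ENNReal.ofReal_pos.mpr
    (mul_pos (mul_pos (mul_pos two_pos hβ.1) (sub_pos.mpr hβ.2)) (Nat.cast_pos.mpr hn))).ne'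
  have hdiv (w : (Fin n → Z) → ℝ≥0∞) : ∫⁻ S, w S / c ∂μ = (∫⁻ S, w S ∂μ) / c := by
    simp_rw [div_eq_mul_inv]
    exact lintegral_mul_const' _ _ (ENNReal.inv_ne_top.mpr hc)
  refine lintegral_le_lintegral_of_ae_add_le_add (u := fun S => u S / c) (v := fun S => v S / c)
    (hu.div_const c) (hv.div_const c) ?_ ?_ ?_
  · filter_upwards [huv_ae] with S hS
    have := hQprob S
    exact Psi_add_div_le_Psi_add_div ℓ β δ S (by simpa only [klDivE_eq_klDiv] using hS)
  · rw [hdiv, hdiv]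
    gcongr
  · rw [hdiv]
    exact ENNReal.div_ne_top (ne_top_of_le_ne_top ENNReal.one_ne_top hv_le) hc
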